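/- Splitting the single-layer kernel: with K(s,t) = ln‖f(s)-f(t)‖, K₁(s,t) = (1/2)ln R(s,t) (extended by continuity to t = s via K₁(s,s) = ln J(s)), and K₂(s,t) = ln|s-t|, one has ∫∫ K(s,t) g(s) h(t) ds dt = ∫∫ K₁(s,t) g(s) h(t) ds dt + ∫∫ K₂(s,t) g(s) h(t) ds dt for all bounded measurable g, h, where all three double integrals over [a,b]² exist. -/

import Mathlib

/-!
Off the diagonal, which is null, injectivity gives `‖f s - f t‖ ≠ 0`, so
`ln ‖f s - f t‖ = ½ ln R(s,t) + ln |s - t|` pointwise. The first summand is a.e. bounded by the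
two-sided bound on `R`, hence integrable on the square; the second is integrable because the
shear `(s, t) ↦ (s - t, t)` preserves Lebesgue measure and turns it into the locally integrable
function `ln` of one variable. Multiplying by bounded measurable weights keeps integrability, and
the integral of the a.e. sum splits.
-/

open MeasureTheory Set

theorem Real.log_eq_half_log_sq_div_add_log_abs {x r : ℝ} (hx : x ≠ 0) (hr : r ≠ 0) :
    Real.log x = 1 / 2 * Real.log (x ^ 2 / r ^ 2) + Real.log |r| := by
  rw [Real.log_div (pow_ne_zero 2 hx) (pow_ne_zero 2 hr), Real.log_pow, Real.log_pow,
    Real.log_abs]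
  push_cast
  ring

theorem ae_fst_ne_snd_prod {α : Type*} [MeasurableSpace α] [MeasurableEq α]
    (μ ν : Measure α) [SFinite ν] [NullSingletonClass ν] : ∀ᵐ p ∂μ.prod ν, p.1 ≠ p.2 := by
  have hdiag : μ.prod ν (diagonal α) = 0 := by
    rw [Measure.measure_prod_null measurableSet_diagonal]
    refine Filter.Eventually.of_forall fun x => ?_
    have : Prod.mk x ⁻¹' diagonal α = {x} := by ext y; simp [eq_comm]
    simp [this]
  exact measure_eq_zero_iff_ae_notMem.mp hdiag

theorem integrableOn_comp_sub_Icc_prod {φ : ℝ → ℝ} {a b c d : ℝ}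
    (hφ : IntegrableOn φ (Icc (a - d) (b - c))) :
    IntegrableOn (fun p : ℝ × ℝ => φ (p.1 - p.2)) (Icc a b ×ˢ Icc c d) := by
  set T := Icc (a - d) (b - c) ×ˢ Icc c d
  have hT : IntegrableOn (fun q : ℝ × ℝ => φ q.1) T := by
    rw [IntegrableOn, Measure.volume_eq_prod, ← Measure.prod_restrict]
    exact hφ.comp_fst _
  have hshear :
      Integrable (T.indicator (fun q => φ q.1) ∘ fun p : ℝ × ℝ => (p.1 - p.2, p.2)) := by
    rw [Measure.volume_eq_prod] at hT ⊢
    exact (measurePreserving_sub_prod volume volume).integrable_comp_of_integrable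
      ((integrable_indicator_iff (measurableSet_Icc.prod measurableSet_Icc)).2 hT)
  refine hshear.integrableOn.congr_fun (fun p hp => ?_) (measurableSet_Icc.prod measurableSet_Icc)
  have hpT : (p.1 - p.2, p.2) ∈ T :=
    ⟨⟨by linarith [hp.1.1, hp.2.2], by linarith [hp.1.2, hp.2.1]⟩, hp.2⟩
  simp [hpT]

theorem Integrable.mul_bounded_fst_snd {α β : Type*} [MeasurableSpace α] [MeasurableSpace β]
    {μ : Measure (α × β)} {k : α × β → ℝ} (hk : Integrable k μ) {g : α → ℝ} {h : β → ℝ}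
    (hg : Measurable g) (hh : Measurable h) {Mg Mh : ℝ} (hgb : ∀ x, |g x| ≤ Mg)
    (hhb : ∀ y, |h y| ≤ Mh) : Integrable (fun p => k p * g p.1 * h p.2) μ := by
  have hgh : ∀ p : α × β, ‖g p.1 * h p.2‖ ≤ Mg * Mh := fun p => by
    rw [Real.norm_eq_abs, abs_mul]
    exact mul_le_mul (hgb _) (hhb _) (abs_nonneg _) ((abs_nonneg _).trans (hgb p.1))
  simpa only [mul_assoc] using hk.mul_bdd
    (by fun_prop : Measurable fun p : α × β => g p.1 * h p.2).aestronglyMeasurable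
    (Filter.Eventually.of_forall hgh)

theorem integrableOn_log_sq_norm_sub_div_sq_sub {E : Type*} [NormedAddCommGroup E] {f : ℝ → E}
    {s : Set ℝ} (hs : IsCompact s) (hf : ContinuousOn f s) {c C : ℝ} (hc : 0 < c)
    (hbound : ∀ x ∈ s, ∀ y ∈ s, x ≠ y →
      c ≤ ‖f x - f y‖ ^ 2 / (x - y) ^ 2 ∧ ‖f x - f y‖ ^ 2 / (x - y) ^ 2 ≤ C) :
    IntegrableOn (fun p : ℝ × ℝ => Real.log (‖f p.1 - f p.2‖ ^ 2 / (p.1 - p.2) ^ 2)) (s ×ˢ s) := by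
  have hQ : MeasurableSet (s ×ˢ s) := hs.measurableSet.prod hs.measurableSet
  have : IsFiniteMeasure (volume.restrict (s ×ˢ s)) :=
    isFiniteMeasure_restrict.2 (hs.prod hs).measure_lt_top.ne
  have hnorm : AEMeasurable (fun p : ℝ × ℝ => ‖f p.1 - f p.2‖) (volume.restrict (s ×ˢ s)) :=
    ((hf.comp continuousOn_fst fun _ hp => hp.1).sub
      (hf.comp continuousOn_snd fun _ hp => hp.2)).norm.aemeasurable hQ
  have hoff : ∀ᵐ p : ℝ × ℝ, p.1 ≠ p.2 := by
    rw [Measure.volume_eq_prod]; exact ae_fst_ne_snd_prod volume volume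
  refine Integrable.of_bound (Real.measurable_log.comp_aemeasurable ((hnorm.pow_const 2).div
    (by fun_prop : Measurable fun p : ℝ × ℝ => (p.1 - p.2) ^ 2).aemeasurable)).aestronglyMeasurable
    (max |Real.log c| |Real.log C|) ?_
  filter_upwards [ae_restrict_mem hQ, ae_restrict_of_ae hoff] with p hp hne
  obtain ⟨hlo, hhi⟩ := hbound _ hp.1 _ hp.2 hne
  exact abs_le_max_abs_abs (Real.log_le_log hc hlo) (Real.log_le_log (hc.trans_le hlo) hhi)

theorem stmt12_general (a b : ℝ) (f : ℝ → EuclideanSpace ℝ (Fin 2))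
    (hf : ContDiffOn ℝ 1 f (Set.Icc a b)) (hinj : Set.InjOn f (Set.Icc a b))
    (J : ℝ → ℝ)
    (R : ℝ → ℝ → ℝ) (hR : ∀ s t, s ≠ t → R s t = ‖f s - f t‖ ^ 2 / (s - t) ^ 2)
    (c C : ℝ) (hc : 0 < c)
    (hRbound : ∀ s ∈ Set.Icc a b, ∀ t ∈ Set.Icc a b, s ≠ t → c ≤ R s t ∧ R s t ≤ C)
    (K K₁ K₂ : ℝ → ℝ → ℝ)
    (hK : ∀ s t, K s t = Real.log ‖f s - f t‖)
    (hK₁ : ∀ s t, K₁ s t = if s = t then Real.log (J s) else (1 / 2) * Real.log (R s t))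
    (hK₂ : ∀ s t, K₂ s t = Real.log |s - t|)
    (g h : ℝ → ℝ) (hg : Measurable g) (hh : Measurable h)
    (Mg Mh : ℝ) (hgb : ∀ x, |g x| ≤ Mg) (hhb : ∀ x, |h x| ≤ Mh) :
    IntegrableOn (fun p : ℝ × ℝ => K p.1 p.2 * g p.1 * h p.2)
      (Set.Icc a b ×ˢ Set.Icc a b) volume ∧
    IntegrableOn (fun p : ℝ × ℝ => K₁ p.1 p.2 * g p.1 * h p.2)
      (Set.Icc a b ×ˢ Set.Icc a b) volume ∧
    IntegrableOn (fun p : ℝ × ℝ => K₂ p.1 p.2 * g p.1 * h p.2)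
      (Set.Icc a b ×ˢ Set.Icc a b) volume ∧
    (∫ p in Set.Icc a b ×ˢ Set.Icc a b, K p.1 p.2 * g p.1 * h p.2) =
      (∫ p in Set.Icc a b ×ˢ Set.Icc a b, K₁ p.1 p.2 * g p.1 * h p.2) +
      (∫ p in Set.Icc a b ×ˢ Set.Icc a b, K₂ p.1 p.2 * g p.1 * h p.2) := by
  set Q := Icc a b ×ˢ Icc a b
  have hoff : ∀ᵐ p ∂volume.restrict Q, p ∈ Q ∧ p.1 ≠ p.2 := by
    have hne : ∀ᵐ p : ℝ × ℝ, p.1 ≠ p.2 := by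
      rw [Measure.volume_eq_prod]; exact ae_fst_ne_snd_prod volume volume
    exact (ae_restrict_mem (measurableSet_Icc.prod measurableSet_Icc)).and (ae_restrict_of_ae hne)
  have hK₁int : IntegrableOn (fun p : ℝ × ℝ => K₁ p.1 p.2) Q := by
    refine ((integrableOn_log_sq_norm_sub_div_sq_sub isCompact_Icc hf.continuousOn hc
      fun s hs t ht hne => hR s t hne ▸ hRbound s hs t ht hne).const_mul (1 / 2)).congr ?_
    filter_upwards [hoff] with p ⟨_, hne⟩
    rw [hK₁, if_neg hne, hR _ _ hne]
  have hK₂int : IntegrableOn (fun p : ℝ × ℝ => K₂ p.1 p.2) Q := by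
    simp only [hK₂, Real.log_abs]
    refine integrableOn_comp_sub_Icc_prod (IntegrableOn.mono_set ?_ Icc_subset_uIcc)
    exact (intervalIntegrable_iff' (f := Real.log)).1 intervalIntegral.intervalIntegrable_log'
  have hsplit : ∀ᵐ p ∂volume.restrict Q, K p.1 p.2 = K₁ p.1 p.2 + K₂ p.1 p.2 := by
    filter_upwards [hoff] with p ⟨hp, hne⟩
    have hf_ne : f p.1 - f p.2 ≠ 0 := sub_ne_zero.2 fun heq => hne (hinj hp.1 hp.2 heq)
    rw [hK, hK₁, hK₂, if_neg hne, hR _ _ hne]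
    exact Real.log_eq_half_log_sq_div_add_log_abs (norm_ne_zero_iff.2 hf_ne) (sub_ne_zero.2 hne)
  have weight := fun {k : ℝ × ℝ → ℝ} (hk : IntegrableOn k Q) =>
    Integrable.mul_bounded_fst_snd hk hg hh hgb hhb
  have hweighted : (fun p : ℝ × ℝ => K p.1 p.2 * g p.1 * h p.2) =ᵐ[volume.restrict Q]
      (fun p => K₁ p.1 p.2 * g p.1 * h p.2) + fun p => K₂ p.1 p.2 * g p.1 * h p.2 := by
    filter_upwards [hsplit] with p hp
    simp only [hp, Pi.add_apply]; ring
  refine ⟨((weight hK₁int).add (weight hK₂int)).congr hweighted.symm, weight hK₁int,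
    weight hK₂int, ?_⟩
  rw [integral_congr_ae hweighted]
  exact integral_add (weight hK₁int) (weight hK₂int)

/-- Splitting of the single-layer kernel `K = K₁ + K₂` with
`K(s,t) = ln‖f(s)-f(t)‖`, `K₁(s,t) = (1/2)ln R(s,t)` (extended by continuity by
`K₁(s,s) = ln J(s)`) and `K₂(s,t) = ln|s-t|`: all three double integrals over
`[a,b]²` against bounded measurable `g, h` exist and
`∫∫ K g h = ∫∫ K₁ g h + ∫∫ K₂ g h`. -/
theorem stmt12 (a b : ℝ) (hab : a < b) (f : ℝ → EuclideanSpace ℝ (Fin 2))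
    (hf : ContDiffOn ℝ 1 f (Set.Icc a b)) (hinj : Set.InjOn f (Set.Icc a b))
    (J : ℝ → ℝ) (hJ : ∀ s, J s = ‖derivWithin f (Set.Icc a b) s‖)
    (R : ℝ → ℝ → ℝ) (hR : ∀ s t, s ≠ t → R s t = ‖f s - f t‖ ^ 2 / (s - t) ^ 2)
    (c C : ℝ) (hc : 0 < c)
    (hRbound : ∀ s ∈ Set.Icc a b, ∀ t ∈ Set.Icc a b, s ≠ t → c ≤ R s t ∧ R s t ≤ C)
    (K K₁ K₂ : ℝ → ℝ → ℝ)
    (hK : ∀ s t, K s t = Real.log ‖f s - f t‖)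
    (hK₁ : ∀ s t, K₁ s t = if s = t then Real.log (J s) else (1 / 2) * Real.log (R s t))
    (hK₂ : ∀ s t, K₂ s t = Real.log |s - t|)
    (g h : ℝ → ℝ) (hg : Measurable g) (hh : Measurable h)
    (Mg Mh : ℝ) (hgb : ∀ x, |g x| ≤ Mg) (hhb : ∀ x, |h x| ≤ Mh) :
    IntegrableOn (fun p : ℝ × ℝ => K p.1 p.2 * g p.1 * h p.2)
      (Set.Icc a b ×ˢ Set.Icc a b) volume ∧
    IntegrableOn (fun p : ℝ × ℝ => K₁ p.1 p.2 * g p.1 * h p.2)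
      (Set.Icc a b ×ˢ Set.Icc a b) volume ∧
    IntegrableOn (fun p : ℝ × ℝ => K₂ p.1 p.2 * g p.1 * h p.2)
      (Set.Icc a b ×ˢ Set.Icc a b) volume ∧
    (∫ p in Set.Icc a b ×ˢ Set.Icc a b, K p.1 p.2 * g p.1 * h p.2) =
      (∫ p in Set.Icc a b ×ˢ Set.Icc a b, K₁ p.1 p.2 * g p.1 * h p.2) +
      (∫ p in Set.Icc a b ×ˢ Set.Icc a b, K₂ p.1 p.2 * g p.1 * h p.2) :=
  stmt12_general a b f hf hinj J R hR c C hc hRbound K K₁ K₂ hK hK₁ hK₂ g h hg hh Mg Mh hgb hhb
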